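/- Let BWT be the Burrows–Wheeler transform of a text T of length n ending in a unique smallest terminator. If BWT[i] = BWT[i+1], then LF(i+1) = LF(i) + 1. Consequently, the LF permutation has at most r runs of contiguously mapped positions, where r is the number of maximal equal-character runs in BWT. -/

import Mathlib

/-- The set of run starts of the map `f` on `{0,…,n-1}`. -/
def runStarts (n : ℕ) (f : ℕ → ℕ) : Finset ℕ :=
  (Finset.range n).filter (fun i => i = 0 ∨ f (i - 1) + 1 ≠ f i)

/-- The LF mapping computed from a BWT string `B` on `{0,…,n-1}`:
`LF i = C[B i] + rank_{B i}(B, i)`. -/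
def LFmap {α : Type*} [LinearOrder α] (n : ℕ) (B : ℕ → α) (i : ℕ) : ℕ :=
  ((Finset.range n).filter (fun j => B j < B i)).card +
  ((Finset.range i).filter (fun j => B j = B i)).card

/-- When `B i = B (i + 1)` the `C`-terms agree and the rank grows by the occurrence at `i`. -/
theorem LFmap_succ_of_eq {α : Type*} [LinearOrder α] (n : ℕ) (B : ℕ → α) {i : ℕ}
    (h : B i = B (i + 1)) : LFmap n B (i + 1) = LFmap n B i + 1 := by
  have hrank : (Finset.range (i + 1)).filter (fun j => B j = B i)
      = insert i ((Finset.range i).filter (fun j => B j = B i)) := by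
    rw [Finset.range_add_one, Finset.filter_insert, if_pos rfl]
  rw [LFmap, LFmap, ← h, hrank, Finset.card_insert_of_notMem (by simp), add_assoc]

theorem runStarts_subset_of_succ_of_eq {β : Type*} [DecidableEq β] (n : ℕ) (f : ℕ → ℕ)
    (B : ℕ → β) (hf : ∀ i, B i = B (i + 1) → f (i + 1) = f i + 1) :
    runStarts n f ⊆ (Finset.range n).filter (fun i => i = 0 ∨ B (i - 1) ≠ B i) := by
  intro i hi
  simp only [runStarts, Finset.mem_filter] at hi ⊢
  refine ⟨hi.1, ?_⟩
  cases i with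
  | zero => exact Or.inl rfl
  | succ j =>
    simp only [Nat.add_sub_cancel, Nat.succ_ne_zero, false_or] at hi ⊢
    exact fun hB => hi.2 (hf j hB).symm

theorem statement_6_general {α : Type*} [LinearOrder α] (n : ℕ) (B : ℕ → α) :
    (∀ i, i + 1 < n → B i = B (i + 1) → LFmap n B (i + 1) = LFmap n B i + 1) ∧
    (runStarts n (LFmap n B)).card ≤
      ((Finset.range n).filter (fun i => i = 0 ∨ B (i - 1) ≠ B i)).card :=
  ⟨fun _ _ h => LFmap_succ_of_eq n B h,
    Finset.card_le_card <|
      runStarts_subset_of_succ_of_eq n _ B fun _ h => LFmap_succ_of_eq n B h⟩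

/-- If `BWT[i] = BWT[i+1]` then `LF(i+1) = LF(i) + 1`; consequently the LF permutation
has at most `r` runs, where `r` is the number of equal-character runs of the BWT. -/
theorem statement_6 {α : Type*} [LinearOrder α] (n : ℕ) (hn : 0 < n) (B : ℕ → α) :
    (∀ i, i + 1 < n → B i = B (i + 1) → LFmap n B (i + 1) = LFmap n B i + 1) ∧
    (runStarts n (LFmap n B)).card ≤
      ((Finset.range n).filter (fun i => i = 0 ∨ B (i - 1) ≠ B i)).card :=
  statement_6_general n B
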